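/- (Monotone convergence of the entropy-regularized reward in AREA, Theorem 5 of the paper.) Let r : 𝓗^T×𝓜^T → ℝ be a reward and γ > 0. Let (P̂^{(n)})_{n≥0} be human models and (Q̂^{(n)})_{n≥1} machine policies with full support (Q̂^{(n)}(m_t|h^{t-1},m^{t-1}) > 0 everywhere) such that: (i) for every n ≥ 0, Q̂^{(n+1)} maximizes Q ↦ H_{P̂^{(n)}Q}(M^T‖H^T) + γ·E_{P̂^{(n)}Q}[r(H^T,M^T)] over all machine policies; and (ii) for every n ≥ 1 the step-dependent inequality constraint holds: E_{P̂^{(n)}Q̂^{(n)}}[−log Q̂^{(n)}(M^T‖H^T) + γ·r(H^T,M^T)] ≥ E_{P̂^{(n-1)}Q̂^{(n)}}[−log Q̂^{(n)}(M^T‖H^T) + γ·r(H^T,M^T)]. Then the sequence L^{(n)} := E_{P̂^{(n)}Q̂^{(n)}}[−log Q̂^{(n)}(M^T‖H^T) + γ·r(H^T,M^T)] (n ≥ 1) is nondecreasing and bounded above by T·log|𝓜| + γ·max_{h^T,m^T} r(h^T,m^T); hence it converges. -/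

import Mathlib

/-! Common framework: finite-horizon human–machine interaction processes.
Times are 0-indexed: step `t : Fin T` corresponds to the paper's step `t+1`.
A human model gives conditional PMFs `P(h_t | h^{t-1}, m^t)`: the value
`p t h m a` may depend only on `h s` for `s < t`, on `m s` for `s ≤ t`, and on `a`.
A machine policy gives conditional PMFs `Q(m_t | h^{t-1}, m^{t-1})`: the value
`q t h m b` may depend only on `h s`, `m s` for `s < t`, and on `b`. -/

structure HumanModel (T : ℕ) (H M : Type*) [Fintype H] where
  p : Fin T → (Fin T → H) → (Fin T → M) → H → ℝ
  causal : ∀ (t : Fin T) (h h' : Fin T → H) (m m' : Fin T → M),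
      (∀ s, s < t → h s = h' s) → (∀ s, s ≤ t → m s = m' s) → p t h m = p t h' m'
  nonneg : ∀ t h m a, 0 ≤ p t h m a
  sum_one : ∀ t h m, ∑ a, p t h m a = 1

structure MachinePolicy (T : ℕ) (H M : Type*) [Fintype M] where
  q : Fin T → (Fin T → H) → (Fin T → M) → M → ℝ
  causal : ∀ (t : Fin T) (h h' : Fin T → H) (m m' : Fin T → M),
      (∀ s, s < t → h s = h' s) → (∀ s, s < t → m s = m' s) → q t h m = q t h' m'
  nonneg : ∀ t h m b, 0 ≤ q t h m b
  sum_one : ∀ t h m, ∑ b, q t h m b = 1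

variable {T : ℕ} {H M : Type*} [Fintype H] [Fintype M]

/-- Causally conditioned distribution of the human: `P(h^T ‖ m^T)`. -/
noncomputable def HumanModel.cc (P : HumanModel T H M) (h : Fin T → H) (m : Fin T → M) : ℝ :=
  ∏ t, P.p t h m (h t)

/-- Causally conditioned distribution of the machine: `Q(m^T ‖ h^T)`. -/
noncomputable def MachinePolicy.cc (Q : MachinePolicy T H M) (h : Fin T → H) (m : Fin T → M) : ℝ :=
  ∏ t, Q.q t h m (m t)

/-- Joint PMF `PQ(h^T, m^T)`. -/
noncomputable def jointPMF (P : HumanModel T H M) (Q : MachinePolicy T H M)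
    (h : Fin T → H) (m : Fin T → M) : ℝ :=
  P.cc h m * Q.cc h m

/-- Expectation `E_{PQ}[φ(H^T, M^T)]`. -/
noncomputable def expVal (P : HumanModel T H M) (Q : MachinePolicy T H M)
    (φ : (Fin T → H) → (Fin T → M) → ℝ) : ℝ :=
  ∑ h : Fin T → H, ∑ m : Fin T → M, jointPMF P Q h m * φ h m

/-- Causally conditioned entropy of the human, `H_{PQ}(H^T ‖ M^T)`. -/
noncomputable def humanEntropy (P : HumanModel T H M) (Q : MachinePolicy T H M) : ℝ :=
  ∑ h : Fin T → H, ∑ m : Fin T → M, jointPMF P Q h m * (- Real.log (P.cc h m))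

/-- Causally conditioned entropy of the machine, `H_{PQ}(M^T ‖ H^T)`. -/
noncomputable def machineEntropy (P : HumanModel T H M) (Q : MachinePolicy T H M) : ℝ :=
  ∑ h : Fin T → H, ∑ m : Fin T → M, jointPMF P Q h m * (- Real.log (Q.cc h m))

/-- The entropy-regularized expected reward at AREA iteration `n`:
`L^{(n)} = E_{P̂^{(n)}Q̂^{(n)}}[−log Q̂^{(n)}(M^T‖H^T) + γ·r(H^T,M^T)]`. -/
noncomputable def areaL (P : ℕ → HumanModel T H M) (Q : ℕ → MachinePolicy T H M)
    (r : (Fin T → H) → (Fin T → M) → ℝ) (γ : ℝ) (n : ℕ) : ℝ :=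
  expVal (P n) (Q n) (fun h m => - Real.log ((Q n).cc h m) + γ * r h m)

/-! Writing `L⁽ⁿ⁾ = H_{P̂⁽ⁿ⁾Q̂⁽ⁿ⁾}(Mᵀ‖Hᵀ) + γ·E_{P̂⁽ⁿ⁾Q̂⁽ⁿ⁾}[r]`, passing from `L⁽ⁿ⁾` to `L⁽ⁿ⁺¹⁾`
first replaces `Q̂⁽ⁿ⁾` by the optimal response `Q̂⁽ⁿ⁺¹⁾` to `P̂⁽ⁿ⁾`, which can only increase the
objective by (i), and then replaces `P̂⁽ⁿ⁾` by `P̂⁽ⁿ⁺¹⁾`, which can only increase it by (ii).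
For the bound, `−q log q` lies below its tangent at `q = K⁻¹`, `K = |𝓜|ᵀ`; weighting this by
`P(hᵀ‖mᵀ)`, whose total mass over all `(hᵀ, mᵀ)` is `K` by the chain rule, gives
`H(Mᵀ‖Hᵀ) ≤ log K = T log |𝓜|`, while `E[r] ≤ max r`. A bounded monotone sequence converges. -/

open Function Real

theorem sum_prod_eq_one_of_causal {X : Type*} [Fintype X] [Nonempty X] {n : ℕ}
    (g : Fin n → (Fin n → X) → ℝ)
    (causal : ∀ t x x', (∀ s ≤ t, x s = x' s) → g t x = g t x')
    (sum_one : ∀ t x, ∑ a, g t (update x t a) = 1) :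
    ∑ x, ∏ t, g t x = 1 := by
  -- The first factor depends only on `x 0`; for fixed `x 0` the others form a causal kernel.
  induction n with
  | zero => simp
  | succ n ih =>
    have head_eq : ∀ x : Fin (n + 1) → X, g 0 x = g 0 (fun _ => x 0) := fun x =>
      causal 0 _ _ fun s hs => by rw [Fin.le_zero_iff.mp hs]
    have head_sum : ∑ a, g 0 (fun _ => a) = 1 := by
      simpa [head_eq (update _ 0 _)] using sum_one 0 fun _ => Classical.arbitrary X
    have tail_sum : ∀ a, ∑ y, ∏ t : Fin n, g t.succ (Fin.cons a y) = 1 := fun a =>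
      ih (fun t y => g t.succ (Fin.cons a y))
        (fun t y y' hy => causal _ _ _ fun s hs => by
          cases s using Fin.cases with
          | zero => rfl
          | succ s => exact hy s (Fin.succ_le_succ_iff.mp hs))
        (fun t y => by simpa only [Fin.cons_update] using sum_one t.succ (Fin.cons a y))
    calc ∑ x, ∏ t, g t x = ∑ a, ∑ y, ∏ t, g t (Fin.cons a y : Fin (n + 1) → X) := by
          rw [← Fintype.sum_prod_type']
          exact ((Fin.consEquiv fun _ => X).sum_comp _).symm
      _ = ∑ a, g 0 (fun _ => a) * ∑ y, ∏ t : Fin n, g t.succ (Fin.cons a y) := by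
          simp only [Fin.prod_univ_succ, Finset.mul_sum, head_eq (Fin.cons _ _), Fin.cons_zero]
      _ = 1 := by simp only [tail_sum, mul_one, head_sum]

theorem negMulLog_le_tangent {q K : ℝ} (hq : 0 ≤ q) (hK : 0 < K) :
    negMulLog q ≤ q * log K + K⁻¹ - q := by
  have h := negMulLog_le_one_sub_self (mul_nonneg hK.le hq)
  rw [negMulLog_mul, negMulLog] at h
  rw [← mul_le_mul_iff_of_pos_left hK, mul_sub, mul_add, mul_inv_cancel₀ hK.ne']
  linarith

omit [Fintype M] in
theorem HumanModel.p_update_history (P : HumanModel T H M) (t : Fin T) (h : Fin T → H)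
    (m : Fin T → M) (a : H) : P.p t (update h t a) m = P.p t h m :=
  P.causal t _ _ _ _ (fun _ hs => update_of_ne hs.ne _ _) fun _ _ => rfl

omit [Fintype H] in
theorem MachinePolicy.q_update (Q : MachinePolicy T H M) (t : Fin T) (h : Fin T → H)
    (m : Fin T → M) (a : H) (b : M) : Q.q t (update h t a) (update m t b) = Q.q t h m :=
  Q.causal t _ _ _ _ (fun _ hs => update_of_ne hs.ne _ _) fun _ hs => update_of_ne hs.ne _ _

omit [Fintype M] in
theorem HumanModel.cc_nonneg (P : HumanModel T H M) (h : Fin T → H) (m : Fin T → M) :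
    0 ≤ P.cc h m :=
  Finset.prod_nonneg fun t _ => P.nonneg t h m (h t)

omit [Fintype H] in
theorem MachinePolicy.cc_nonneg (Q : MachinePolicy T H M) (h : Fin T → H) (m : Fin T → M) :
    0 ≤ Q.cc h m :=
  Finset.prod_nonneg fun t _ => Q.nonneg t h m (m t)

theorem jointPMF_nonneg (P : HumanModel T H M) (Q : MachinePolicy T H M)
    (h : Fin T → H) (m : Fin T → M) : 0 ≤ jointPMF P Q h m :=
  mul_nonneg (P.cc_nonneg h m) (Q.cc_nonneg h m)

omit [Fintype M] in
theorem HumanModel.sum_cc [Nonempty H] (P : HumanModel T H M) (m : Fin T → M) :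
    ∑ h, P.cc h m = 1 :=
  sum_prod_eq_one_of_causal (fun t h => P.p t h m (h t))
    (fun t h h' hh => by
      rw [P.causal t h h' m m (fun s hs => hh s hs.le) fun _ _ => rfl, hh t le_rfl])
    (fun t h => by simpa only [update_self, P.p_update_history] using P.sum_one t h m)

theorem sum_jointPMF [Nonempty H] [Nonempty M] (P : HumanModel T H M)
    (Q : MachinePolicy T H M) : ∑ h, ∑ m, jointPMF P Q h m = 1 := by
  let g : Fin T → (Fin T → H × M) → ℝ := fun t x =>
    P.p t (Prod.fst ∘ x) (Prod.snd ∘ x) (x t).1 * Q.q t (Prod.fst ∘ x) (Prod.snd ∘ x) (x t).2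
  have causal : ∀ t x x', (∀ s ≤ t, x s = x' s) → g t x = g t x' := fun t x x' hx => by
    simp only [g, hx t le_rfl,
      P.causal t (Prod.fst ∘ x) (Prod.fst ∘ x') (Prod.snd ∘ x) (Prod.snd ∘ x')
        (fun s hs => by simp [hx s hs.le]) (fun s hs => by simp [hx s hs]),
      Q.causal t (Prod.fst ∘ x) (Prod.fst ∘ x') (Prod.snd ∘ x) (Prod.snd ∘ x')
        (fun s hs => by simp [hx s hs.le]) (fun s hs => by simp [hx s hs.le])]
  have sum_one : ∀ t x, ∑ c, g t (update x t c) = 1 := fun t x => by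
    simp only [g, comp_update, update_self, Q.q_update, P.p_update_history,
      Fintype.sum_prod_type]
    rw [Finset.sum_comm]
    simp only [← Finset.sum_mul, P.sum_one, one_mul, Q.sum_one]
  calc ∑ h, ∑ m, jointPMF P Q h m
      = ∑ x : Fin T → H × M, jointPMF P Q (Prod.fst ∘ x) (Prod.snd ∘ x) := by
        rw [← Fintype.sum_prod_type']
        exact ((Equiv.arrowProdEquivProdArrow _ (fun _ => H) fun _ => M).sum_comp
          fun p => jointPMF P Q p.1 p.2).symm
    _ = ∑ x, ∏ t, g t x := by
        simp only [jointPMF, HumanModel.cc, MachinePolicy.cc, g, ← Finset.prod_mul_distrib]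
        rfl
    _ = 1 := sum_prod_eq_one_of_causal g causal sum_one

theorem machineEntropy_le [Nonempty H] [Nonempty M] (P : HumanModel T H M)
    (Q : MachinePolicy T H M) : machineEntropy P Q ≤ T * log (Fintype.card M) := by
  set K : ℝ := (Fintype.card M : ℝ) ^ T
  have hK : 0 < K := by positivity
  have sum_cc : ∑ h, ∑ m, P.cc h m = K := by
    rw [Finset.sum_comm]
    simp [P.sum_cc, K]
  calc machineEntropy P Q = ∑ h, ∑ m, P.cc h m * negMulLog (Q.cc h m) := by
        simp only [machineEntropy, jointPMF, negMulLog, neg_mul, mul_neg, mul_assoc]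
    _ ≤ ∑ h, ∑ m, P.cc h m * (Q.cc h m * log K + K⁻¹ - Q.cc h m) := by
        gcongr with h _ m _
        · exact P.cc_nonneg h m
        · exact negMulLog_le_tangent (Q.cc_nonneg h m) hK
    _ = log K * ∑ h, ∑ m, jointPMF P Q h m + K⁻¹ * ∑ h, ∑ m, P.cc h m
          - ∑ h, ∑ m, jointPMF P Q h m := by
        simp only [jointPMF, Finset.mul_sum, ← Finset.sum_sub_distrib, ← Finset.sum_add_distrib]
        exact Finset.sum_congr rfl fun h _ => Finset.sum_congr rfl fun m _ => by ring
    _ = T * log (Fintype.card M) := by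
        rw [sum_jointPMF, sum_cc, inv_mul_cancel₀ hK.ne', Real.log_pow]
        ring

theorem expVal_le_sSup [Nonempty H] [Nonempty M] (P : HumanModel T H M)
    (Q : MachinePolicy T H M) (r : (Fin T → H) → (Fin T → M) → ℝ) :
    expVal P Q r ≤ sSup (Set.range fun p : (Fin T → H) × (Fin T → M) => r p.1 p.2) := by
  set S := sSup (Set.range fun p : (Fin T → H) × (Fin T → M) => r p.1 p.2)
  calc expVal P Q r ≤ ∑ h, ∑ m, jointPMF P Q h m * S := by
        unfold expVal
        gcongr with h _ m _
        · exact jointPMF_nonneg P Q h m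
        · exact le_csSup (Set.finite_range _).bddAbove ⟨(h, m), rfl⟩
    _ = S := by simp only [← Finset.sum_mul, sum_jointPMF, one_mul]

theorem expVal_neg_log_add (P : HumanModel T H M) (Q : MachinePolicy T H M)
    (r : (Fin T → H) → (Fin T → M) → ℝ) (γ : ℝ) :
    expVal P Q (fun h m => -log (Q.cc h m) + γ * r h m) =
      machineEntropy P Q + γ * expVal P Q r := by
  simp only [expVal, machineEntropy, mul_add, Finset.sum_add_distrib, Finset.mul_sum,
    mul_left_comm]

theorem area_L_monotone_converges_general [Nonempty H] [Nonempty M]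
    (r : (Fin T → H) → (Fin T → M) → ℝ) (γ : ℝ) (hγ : 0 < γ)
    (P : ℕ → HumanModel T H M) (Q : ℕ → MachinePolicy T H M)
    (hopt : ∀ (n : ℕ) (Q' : MachinePolicy T H M),
      machineEntropy (P n) Q' + γ * expVal (P n) Q' r ≤
        machineEntropy (P n) (Q (n + 1)) + γ * expVal (P n) (Q (n + 1)) r)
    (hconstr : ∀ n, 1 ≤ n →
      expVal (P (n - 1)) (Q n) (fun h m => - Real.log ((Q n).cc h m) + γ * r h m) ≤
        expVal (P n) (Q n) (fun h m => - Real.log ((Q n).cc h m) + γ * r h m)) :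
    (∀ n, 1 ≤ n → areaL P Q r γ n ≤ areaL P Q r γ (n + 1)) ∧
    (∀ n, 1 ≤ n → areaL P Q r γ n ≤
      (T : ℝ) * Real.log (Fintype.card M) +
        γ * sSup (Set.range fun p : (Fin T → H) × (Fin T → M) => r p.1 p.2)) ∧
    ∃ l : ℝ, Filter.Tendsto (fun n => areaL P Q r γ (n + 1)) Filter.atTop (nhds l) := by
  have mono (n : ℕ) : areaL P Q r γ n ≤ areaL P Q r γ (n + 1) :=
    calc areaL P Q r γ n
        = machineEntropy (P n) (Q n) + γ * expVal (P n) (Q n) r := expVal_neg_log_add ..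
      _ ≤ machineEntropy (P n) (Q (n + 1)) + γ * expVal (P n) (Q (n + 1)) r := hopt n (Q n)
      _ = expVal (P n) (Q (n + 1)) (fun h m => -log ((Q (n + 1)).cc h m) + γ * r h m) :=
          (expVal_neg_log_add ..).symm
      _ ≤ areaL P Q r γ (n + 1) := hconstr (n + 1) (Nat.le_add_left 1 n)
  have bound (n : ℕ) : areaL P Q r γ n ≤ T * log (Fintype.card M) +
      γ * sSup (Set.range fun p : (Fin T → H) × (Fin T → M) => r p.1 p.2) := by
    rw [areaL, expVal_neg_log_add]
    gcongr
    exacts [machineEntropy_le _ _, expVal_le_sSup _ _ r]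
  exact ⟨fun n _ => mono n, fun n _ => bound n, _,
    tendsto_atTop_ciSup (monotone_nat_of_le_succ fun n => mono (n + 1))
      ⟨_, Set.forall_mem_range.2 fun n => bound (n + 1)⟩⟩

/-- monotone convergence of the entropy-regularized reward in AREA,
Theorem 5 of the paper: under the machine-optimality condition (i) and the
step-dependent inequality constraint (ii), the sequence `L^{(n)}` (for `n ≥ 1`) is
nondecreasing and bounded above by `T·log|𝓜| + γ·max r`; hence it converges. -/
theorem area_L_monotone_converges [NeZero T] [Nonempty H] [Nonempty M]
    (r : (Fin T → H) → (Fin T → M) → ℝ) (γ : ℝ) (hγ : 0 < γ)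
    (P : ℕ → HumanModel T H M) (Q : ℕ → MachinePolicy T H M)
    (hQpos : ∀ n, 1 ≤ n → ∀ (t : Fin T) (h : Fin T → H) (m : Fin T → M) (b : M),
      0 < (Q n).q t h m b)
    (hopt : ∀ (n : ℕ) (Q' : MachinePolicy T H M),
      machineEntropy (P n) Q' + γ * expVal (P n) Q' r ≤
        machineEntropy (P n) (Q (n + 1)) + γ * expVal (P n) (Q (n + 1)) r)
    (hconstr : ∀ n, 1 ≤ n →
      expVal (P (n - 1)) (Q n) (fun h m => - Real.log ((Q n).cc h m) + γ * r h m) ≤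
        expVal (P n) (Q n) (fun h m => - Real.log ((Q n).cc h m) + γ * r h m)) :
    (∀ n, 1 ≤ n → areaL P Q r γ n ≤ areaL P Q r γ (n + 1)) ∧
    (∀ n, 1 ≤ n → areaL P Q r γ n ≤
      (T : ℝ) * Real.log (Fintype.card M) +
        γ * sSup (Set.range fun p : (Fin T → H) × (Fin T → M) => r p.1 p.2)) ∧
    ∃ l : ℝ, Filter.Tendsto (fun n => areaL P Q r γ (n + 1)) Filter.atTop (nhds l) :=
  area_L_monotone_converges_general r γ hγ P Q hopt hconstr
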